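/- Let M' ⊆ M, {𝒰ₓᵒ}, {f_u} witness the SAF-condition for (M, 𝒰) with rank 𝒰 = m ≥ 2, and let 𝒱 be a vector bundle of nonpositive type on M. Then every vector bundle homomorphism φ : ⊗^k 𝒰 → 𝒱 ⊗ Sym^ℓ 𝒰 with 0 ≤ ℓ < k is zero. -/

import Mathlib

noncomputable section

open Module

/-- Data witnessing that the pullback of the rank-`m` bundle `𝒰` to a rational
curve through `(x, u)` splits as `ℒ ⊕ 𝒪^{m-1}` with `ℒ` ample (of degree
`a ≥ 1`) whose fiber at the base point is `ℂu`, and that the pullback of the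
rank-`d` bundle `𝒱` splits as a sum of line bundles `𝒪(bᵢ)` with `bᵢ ≤ 0`
(nonpositive type).  The curve `ℙ¹ → M` is encoded by its restrictions `f`
(the chart around the base point `o = 0`) and `g` (the chart around `∞`),
glued by `t ↦ t⁻¹`; the pulled-back bundles are encoded by trivializations
over the two charts whose transition matrices are the diagonal matrices
`diag(t^{-a},1,…,1)` resp. `diag(t^{-b₁},…,t^{-b_d})`. -/
structure SAFCurve (M : Type*) (𝒰 𝒱 : M → Type*)
    [∀ x, AddCommGroup (𝒰 x)] [∀ x, Module ℂ (𝒰 x)]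
    [∀ x, AddCommGroup (𝒱 x)] [∀ x, Module ℂ (𝒱 x)]
    (m d : ℕ) (hm : 0 < m) (x : M) (u : 𝒰 x) where
  f : ℂ → M
  g : ℂ → M
  compat : ∀ t : ℂ, t ≠ 0 → f t = g t⁻¹
  basept : f 0 = x
  a : ℕ
  ample : 1 ≤ a
  τ : ∀ t : ℂ, (Fin m → ℂ) ≃ₗ[ℂ] 𝒰 (f t)
  τ' : ∀ t : ℂ, (Fin m → ℂ) ≃ₗ[ℂ] 𝒰 (g t)
  trans : ∀ (t : ℂ) (ht : t ≠ 0) (c : Fin m → ℂ),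
    τ t c = cast (congrArg 𝒰 (compat t ht)).symm
      (τ' t⁻¹ (fun i => (if (i : ℕ) = 0 then (t : ℂ) ^ (-(a : ℤ)) else 1) * c i))
  fiber : ∃ cc : ℂ, cc ≠ 0 ∧ τ 0 (Pi.single ⟨0, hm⟩ 1) = cc • (cast (congrArg 𝒰 basept).symm u)
  b : Fin d → ℤ
  nonpos : ∀ i, b i ≤ 0
  ρ : ∀ t : ℂ, (Fin d → ℂ) ≃ₗ[ℂ] 𝒱 (f t)
  ρ' : ∀ t : ℂ, (Fin d → ℂ) ≃ₗ[ℂ] 𝒱 (g t)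
  transV : ∀ (t : ℂ) (ht : t ≠ 0) (c : Fin d → ℂ),
    ρ t c = cast (congrArg 𝒱 (compat t ht)).symm
      (ρ' t⁻¹ (fun i => (t : ℂ) ^ (-(b i)) * c i))

variable {M : Type*} {𝒰 𝒱 : M → Type*}
  [∀ x, AddCommGroup (𝒰 x)] [∀ x, Module ℂ (𝒰 x)]
  [∀ x, AddCommGroup (𝒱 x)] [∀ x, Module ℂ (𝒱 x)]
  {m d k ℓ : ℕ}

/-- Holomorphy of the vector bundle homomorphism
`φ : ⊗^k 𝒰 → 𝒱 ⊗ Sym^ℓ 𝒰` along a curve: in the given trivializations over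
both charts, all matrix entries of `φ` are holomorphic functions of the curve
parameter.  Here `φ` is encoded fiberwise as a `k`-multilinear map on `𝒰ₓ`
with values in `ℓ`-multilinear maps on `𝒰ₓ*` (valued in `𝒱ₓ`), the latter
being the canonical model of `𝒱ₓ ⊗ Sym^ℓ 𝒰ₓ` for symmetric values. -/
def HolAlong (hm : 0 < m) {x : M} {u : 𝒰 x}
    (φ : ∀ y : M, MultilinearMap ℂ (fun _ : Fin k => 𝒰 y)
      (MultilinearMap ℂ (fun _ : Fin ℓ => Module.Dual ℂ (𝒰 y)) (𝒱 y)))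
    (C : SAFCurve M 𝒰 𝒱 m d hm x u) : Prop :=
  (∀ (idx : Fin k → Fin m) (jdx : Fin ℓ → Fin m) (i : Fin d),
    Differentiable ℂ (fun t : ℂ =>
      (C.ρ t).symm (φ (C.f t)
        (fun j => C.τ t (Pi.single (idx j) 1))
        (fun r => ((LinearMap.proj (jdx r) : ((Fin m → ℂ) →ₗ[ℂ] ℂ)).comp
          ((C.τ t).symm : 𝒰 (C.f t) ≃ₗ[ℂ] (Fin m → ℂ)).toLinearMap))) i)) ∧
  (∀ (idx : Fin k → Fin m) (jdx : Fin ℓ → Fin m) (i : Fin d),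
    Differentiable ℂ (fun t : ℂ =>
      (C.ρ' t).symm (φ (C.g t)
        (fun j => C.τ' t (Pi.single (idx j) 1))
        (fun r => ((LinearMap.proj (jdx r) : ((Fin m → ℂ) →ₗ[ℂ] ℂ)).comp
          ((C.τ' t).symm : 𝒰 (C.g t) ≃ₗ[ℂ] (Fin m → ℂ)).toLinearMap))) i))

/-! Along the SAF curve through `u`, where `f_u*𝒰 = 𝒪(a) ⊕ 𝒪^{m-1}`, a coefficient of `φ` with
`i` vector and `j` covector slots in the `𝒪(a)`-direction is a section of `𝒪(bᵢ + a j - a i)`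
with `bᵢ ≤ 0`, so by Liouville it vanishes when `i > j`. At `x` this says that `φ x` kills every
`(v, ξ)` in which more vectors equal `u` than covectors fail to annihilate `u`; this condition
is polynomial in `u`, so it spreads from the open set `𝒰ₓᵒ` to every `u ≠ 0`. Finally, since
`ℓ < k`, in any basis each coefficient of `φ x` has some basis vector occurring more often among
its vector slots than among its covector slots, so it vanishes. -/

theorem Fintype.exists_card_fiber_lt_card_fiber {ι κ β : Type*} [Fintype ι] [Fintype κ]
    [Fintype β] [DecidableEq β] (f : ι → β) (g : κ → β)
    (h : Fintype.card κ < Fintype.card ι) :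
    ∃ p, (Finset.univ.filter (g · = p)).card < (Finset.univ.filter (f · = p)).card := by
  rw [← Finset.card_univ, ← Finset.card_univ,
    Finset.card_eq_sum_card_fiberwise (fun x _ => Finset.mem_univ (f x)),
    Finset.card_eq_sum_card_fiberwise (fun x _ => Finset.mem_univ (g x))] at h
  obtain ⟨p, -, hp⟩ := Finset.exists_lt_of_sum_lt h
  exact ⟨p, hp⟩

theorem Differentiable.apply_eq_zero_of_eq_zpow_mul_comp_inv {F G : ℂ → ℂ}
    (hF : Differentiable ℂ F) (hG : ContinuousAt G 0) {e : ℤ} (he : e < 0)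
    (hFG : ∀ t ≠ 0, F t = t ^ e * G t⁻¹) (z : ℂ) : F z = 0 := by
  refine hF.apply_eq_of_tendsto_cocompact z ?_
  have hH : Filter.Tendsto (fun s : ℂ => s ^ (-e) * G s) (nhds 0) (nhds (0 ^ (-e) * G 0)) :=
    ((continuousAt_zpow₀ (0 : ℂ) (-e) (Or.inr (by omega))).mul hG).tendsto
  rw [zero_zpow _ (by omega), zero_mul] at hH
  rw [← Metric.cobounded_eq_cocompact]
  refine (hH.comp Filter.tendsto_inv₀_cobounded).congr' ?_
  filter_upwards [Bornology.eventually_ne_cobounded 0] with t ht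
  simp [hFG t ht, inv_zpow']

namespace MultilinearMap

theorem map_add_smul {R E F ι : Type*} [CommSemiring R] [AddCommMonoid E] [Module R E]
    [AddCommMonoid F] [Module R F] [Fintype ι] [DecidableEq ι]
    (f : MultilinearMap R (fun _ : ι => E) F) (p q : ι → E) (c : R) :
    f (p + c • q) = ∑ s : Finset ι, c ^ s.card • f (s.piecewise q p) := by
  rw [add_comm, map_add_univ]
  refine Finset.sum_congr rfl fun s _ => ?_
  have hpw : s.piecewise (c • q) p =
      s.piecewise (fun j => c • s.piecewise q p j) (s.piecewise q p) := by
    ext j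
    by_cases hj : j ∈ s <;> simp [hj]
  rw [hpw, map_piecewise_smul, Finset.prod_const]

open Polynomial in
theorem apply_add_smul_eq_zero_of_eventually {E F W ι κ : Type*} [AddCommGroup E] [Module ℂ E]
    [AddCommGroup F] [Module ℂ F] [AddCommGroup W] [Module ℂ W] [Fintype ι] [Fintype κ]
    (T : MultilinearMap ℂ (fun _ : ι => E) (MultilinearMap ℂ (fun _ : κ => F) W))
    (p q : ι → E) (α β : κ → F) (h : ∀ᶠ c in nhds (0 : ℂ), T (p + c • q) (α + c • β) = 0)
    (c : ℂ) : T (p + c • q) (α + c • β) = 0 := by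
  classical
  refine (Module.forall_dual_apply_eq_zero_iff ℂ _).mp fun g => ?_
  let P : ℂ[X] := ∑ s : Finset ι, ∑ t : Finset κ,
    C (g (T (s.piecewise q p) (t.piecewise β α))) * X ^ (s.card + t.card)
  have hP : ∀ c, g (T (p + c • q) (α + c • β)) = P.eval c := by
    intro c
    simp [P, map_add_smul, eval_finsetSum, pow_add, sum_apply, Finset.mul_sum]
    exact Finset.sum_congr rfl fun _ _ => Finset.sum_congr rfl fun _ _ => by ring
  have hP0 : P = 0 := P.eq_zero_of_infinite_isRoot <|
    infinite_of_mem_nhds 0 (h.mono fun c hc => by simp [← hP, hc])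
  rw [hP, hP0, eval_zero]

section Field

variable {K U W ι κ : Type*} [Field K] [AddCommGroup U] [Module K U] [AddCommGroup W] [Module K W]

/-- `T` kills every `(v, ξ)` of positive `u`-weight `#{j | v j = u} - #{r | ξ r u ≠ 0}`. -/
def KillsPositiveWeight
    (T : MultilinearMap K (fun _ : ι => U) (MultilinearMap K (fun _ : κ => Dual K U) W))
    (u : U) : Prop :=
  ∀ (v : ι → U) (ξ : κ → Dual K U) (S : Finset ι) (R : Finset κ), R.card < S.card →
    (∀ j ∈ S, v j = u) → (∀ r ∉ R, ξ r u = 0) → T v ξ = 0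

section Weight

variable {T : MultilinearMap K (fun _ : ι => U) (MultilinearMap K (fun _ : κ => Dual K U) W)}

theorem KillsPositiveWeight.of_smul [DecidableEq ι] {u : U} {c : K}
    (h : T.KillsPositiveWeight (c • u)) (hc : c ≠ 0) : T.KillsPositiveWeight u := by
  intro v ξ S R hRS hv hξ
  have hscale : T (S.piecewise (fun j => c • v j) v) ξ = (∏ _j ∈ S, c) • T v ξ := by
    rw [map_piecewise_smul, smul_apply]
  rw [h _ ξ S R hRS (fun j hj => by rw [S.piecewise_eq_of_mem _ _ hj, hv j hj])
    (fun r hr => by rw [map_smul, hξ r hr, smul_zero]), Finset.prod_const] at hscale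
  exact (smul_eq_zero.mp hscale.symm).resolve_left (pow_ne_zero _ hc)

theorem apply_eq_sum_basis [Fintype ι] [DecidableEq ι] [Fintype κ] [DecidableEq κ]
    {ι' : Type*} [Fintype ι'] (b : Basis ι' K U) (v : ι → U) (ξ : κ → Dual K U) :
    T v ξ = ∑ idx : ι → ι', ∑ jdx : κ → ι',
      ((∏ j, b.repr (v j) (idx j)) * ∏ r, ξ r (b (jdx r))) •
        T (fun j => b (idx j)) (fun r => b.coord (jdx r)) := by
  conv_lhs => rw [← funext fun j => b.sum_repr (v j),
    ← funext fun r => b.sum_dual_apply_smul_coord (ξ r)]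
  simp only [map_sum, sum_apply, map_smul_univ, smul_apply, Finset.smul_sum, smul_smul]

theorem killsPositiveWeight_basis_iff [Fintype ι] [DecidableEq ι] [Fintype κ] [DecidableEq κ]
    {ι' : Type*} [Fintype ι'] [DecidableEq ι'] (b : Basis ι' K U) (p : ι') :
    T.KillsPositiveWeight (b p) ↔ ∀ (idx : ι → ι') (jdx : κ → ι'),
      (Finset.univ.filter (jdx · = p)).card < (Finset.univ.filter (idx · = p)).card →
        T (fun j => b (idx j)) (fun r => b.coord (jdx r)) = 0 := by
  constructor
  · intro h idx jdx hlt
    refine h _ _ _ _ hlt (fun j hj => by rw [(Finset.mem_filter.mp hj).2]) fun r hr => ?_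
    simp [Basis.coord_apply, by simpa using hr]
  · intro h v ξ S R hRS hv hξ
    rw [apply_eq_sum_basis b]
    refine Finset.sum_eq_zero fun idx _ => Finset.sum_eq_zero fun jdx _ => ?_
    by_cases hidx : ∀ j ∈ S, idx j = p
    · by_cases hjdx : ∀ r ∉ R, jdx r ≠ p
      · refine (h idx jdx ?_).symm ▸ smul_zero _
        calc (Finset.univ.filter (jdx · = p)).card ≤ R.card :=
              Finset.card_le_card fun r hr => by
                by_contra hrR; exact hjdx r hrR (Finset.mem_filter.mp hr).2
          _ < S.card := hRS
          _ ≤ _ := Finset.card_le_card fun j hj => by simp [hidx j hj]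
      · obtain ⟨r, hrR, hr⟩ : ∃ r ∉ R, jdx r = p := by simpa using hjdx
        have : ∏ r, ξ r (b (jdx r)) = 0 :=
          Finset.prod_eq_zero (Finset.mem_univ r) (by rw [hr, hξ r hrR])
        rw [this, mul_zero, zero_smul]
    · obtain ⟨j, hjS, hj⟩ : ∃ j ∈ S, idx j ≠ p := by simpa using hidx
      have : ∏ j, b.repr (v j) (idx j) = 0 := Finset.prod_eq_zero (Finset.mem_univ j) (by
        rw [hv j hjS, b.repr_self, Finsupp.single_apply, if_neg (Ne.symm hj)])
      rw [this, zero_mul, zero_smul]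

theorem eq_zero_of_killsPositiveWeight_basis [Fintype ι] [DecidableEq ι] [Fintype κ]
    [DecidableEq κ] (hκι : Fintype.card κ < Fintype.card ι)
    {ι' : Type*} [Fintype ι'] [DecidableEq ι'] (b : Basis ι' K U)
    (h : ∀ p, T.KillsPositiveWeight (b p)) : T = 0 := by
  ext v ξ
  rw [apply_eq_sum_basis b]
  refine Finset.sum_eq_zero fun idx _ => Finset.sum_eq_zero fun jdx _ => ?_
  obtain ⟨p, hp⟩ := Fintype.exists_card_fiber_lt_card_fiber idx jdx hκι
  rw [(killsPositiveWeight_basis_iff b p).mp (h p) idx jdx hp, smul_zero]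

end Weight

variable {ι' ι'' : Type*}

def basisCoeff
    (T : MultilinearMap K (fun _ : ι => U) (MultilinearMap K (fun _ : κ => Dual K U) W))
    (b : Basis ι' K U) (e : Basis ι'' K W) (idx : ι → ι') (jdx : κ → ι') (i : ι'') : K :=
  e.repr (T (fun j => b (idx j)) (fun r => b.coord (jdx r))) i

theorem basisCoeff_of_apply_eq_smul [Fintype ι] [DecidableEq ι] [Fintype κ] [DecidableEq κ]
    (T : MultilinearMap K (fun _ : ι => U) (MultilinearMap K (fun _ : κ => Dual K U) W))
    {b b' : Basis ι' K U} {e e' : Basis ι'' K W} {w : ι' → K} {w' : ι'' → K}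
    (hw : ∀ p, w p ≠ 0) (hw' : ∀ i, w' i ≠ 0)
    (hb : ∀ p, b' p = w p • b p) (he : ∀ i, e' i = w' i • e i)
    (idx : ι → ι') (jdx : κ → ι') (i : ι'') :
    T.basisCoeff b' e' idx jdx i =
      (w' i)⁻¹ * (∏ j, w (idx j)) * (∏ r, w (jdx r))⁻¹ * T.basisCoeff b e idx jdx i := by
  obtain rfl : b' = b.unitsSMul fun p => Units.mk0 _ (hw p) :=
    Basis.eq_of_apply_eq fun p => by simp [hb, Basis.unitsSMul_apply]
  obtain rfl : e' = e.unitsSMul fun i => Units.mk0 _ (hw' i) :=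
    Basis.eq_of_apply_eq fun i => by simp [he, Basis.unitsSMul_apply]
  simp [basisCoeff, Basis.unitsSMul_apply, Basis.coord_unitsSMul, Units.smul_def, map_smul_univ]
  ring

theorem basisCoeff_ofEquivFun [Fintype ι'] [DecidableEq ι'] [Fintype ι'']
    (T : MultilinearMap K (fun _ : ι => U) (MultilinearMap K (fun _ : κ => Dual K U) W))
    (τ : (ι' → K) ≃ₗ[K] U) (ρ : (ι'' → K) ≃ₗ[K] W) (idx : ι → ι') (jdx : κ → ι') (i : ι'') :
    T.basisCoeff (.ofEquivFun τ.symm) (.ofEquivFun ρ.symm) idx jdx i =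
      ρ.symm (T (fun j => τ (Pi.single (idx j) 1))
        (fun r => (LinearMap.proj (jdx r)).comp τ.symm.toLinearMap)) i := by
  have hcoord : ∀ p,
      (Basis.ofEquivFun τ.symm).coord p = (LinearMap.proj p).comp τ.symm.toLinearMap :=
    fun p => by ext; simp [Basis.coord_apply]
  simp [basisCoeff, Basis.coe_ofEquivFun, hcoord]

end Field

theorem killsPositiveWeight_of_eventually {U W ι κ : Type*} [AddCommGroup U] [Module ℂ U]
    [AddCommGroup W] [Module ℂ W] [Fintype ι] [Fintype κ]
    {T : MultilinearMap ℂ (fun _ : ι => U) (MultilinearMap ℂ (fun _ : κ => Dual ℂ U) W)}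
    {u₀ : U} (h : ∀ w, ∀ᶠ c in nhds (0 : ℂ), T.KillsPositiveWeight (u₀ + c • w))
    {u : U} (hu : u ≠ 0) : T.KillsPositiveWeight u := by
  classical
  intro v ξ S R hRS hv hξ
  obtain ⟨χ, hχ⟩ := Module.Projective.exists_dual_eq_one ℂ hu
  set w := u - u₀
  -- Move the slots in `S` along the line `u₀ + c • w`, and replace the covectors outside `R` by
  -- `χ (u₀ + c • w) • ξ r - ξ r (u₀ + c • w) • χ`, which annihilates `u₀ + c • w` and is `ξ r`
  -- at `c = 1`.
  let p : ι → U := S.piecewise (fun _ => u₀) v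
  let q : ι → U := S.piecewise (fun _ => w) 0
  let α : κ → Dual ℂ U := R.piecewise ξ fun r => χ u₀ • ξ r - ξ r u₀ • χ
  let β : κ → Dual ℂ U := R.piecewise 0 fun r => χ w • ξ r - ξ r w • χ
  have hv1 : v = p + (1 : ℂ) • q := by
    ext j
    by_cases hj : j ∈ S <;> simp [p, q, hj, hv j, w]
  have hξ1 : ξ = α + (1 : ℂ) • β := by
    ext r : 1
    by_cases hr : r ∈ R
    · simp [α, β, hr]
    · ext x
      simp [α, β, hr, w]
      linear_combination (-ξ r x) * hχ + χ x * hξ r hr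
  rw [hv1, hξ1]
  refine apply_add_smul_eq_zero_of_eventually T p q α β ?_ 1
  filter_upwards [h w] with c hc
  refine hc _ _ S R hRS (fun j hj => by simp [p, q, hj]) fun r hr => ?_
  simp [α, β, hr]
  ring

end MultilinearMap

section Bundle

variable {φ : ∀ y : M, MultilinearMap ℂ (fun _ : Fin k => 𝒰 y)
  (MultilinearMap ℂ (fun _ : Fin ℓ => Module.Dual ℂ (𝒰 y)) (𝒱 y))}

theorem basisCoeff_ofEquivFun_of_eq {y z : M} (h : y = z)
    {τ : (Fin m → ℂ) ≃ₗ[ℂ] 𝒰 y} {τ' : (Fin m → ℂ) ≃ₗ[ℂ] 𝒰 z}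
    {ρ : (Fin d → ℂ) ≃ₗ[ℂ] 𝒱 y} {ρ' : (Fin d → ℂ) ≃ₗ[ℂ] 𝒱 z} {w : Fin m → ℂ} {w' : Fin d → ℂ}
    (hw : ∀ p, w p ≠ 0) (hw' : ∀ i, w' i ≠ 0)
    (hτ : ∀ c, τ c = cast (congrArg 𝒰 h).symm (τ' fun p => w p * c p))
    (hρ : ∀ c, ρ c = cast (congrArg 𝒱 h).symm (ρ' fun i => w' i * c i))
    (idx : Fin k → Fin m) (jdx : Fin ℓ → Fin m) (i : Fin d) :
    (φ y).basisCoeff (.ofEquivFun τ.symm) (.ofEquivFun ρ.symm) idx jdx i =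
      (w' i)⁻¹ * (∏ j, w (idx j)) * (∏ r, w (jdx r))⁻¹ *
        (φ z).basisCoeff (.ofEquivFun τ'.symm) (.ofEquivFun ρ'.symm) idx jdx i := by
  subst h
  refine (φ y).basisCoeff_of_apply_eq_smul hw hw' (fun p => ?_) (fun i => ?_) idx jdx i
  · simp only [Basis.coe_ofEquivFun, LinearEquiv.symm_symm, hτ, cast_eq, ← map_smul]
    congr 1
    ext q
    by_cases hq : q = p <;> simp [hq]
  · simp only [Basis.coe_ofEquivFun, LinearEquiv.symm_symm, hρ, cast_eq, ← map_smul]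
    congr 1
    ext q
    by_cases hq : q = i <;> simp [hq]

theorem killsPositiveWeight_cast {y x : M} (h : y = x) {u : 𝒰 x} :
    (φ y).KillsPositiveWeight (cast (congrArg 𝒰 h).symm u) ↔ (φ x).KillsPositiveWeight u := by
  subst h
  rfl

namespace SAFCurve

variable {x : M} {u : 𝒰 x} {hm : 0 < m} (C : SAFCurve M 𝒰 𝒱 m d hm x u)

theorem basisCoeff_eq_zpow_mul {t : ℂ} (ht : t ≠ 0)
    (idx : Fin k → Fin m) (jdx : Fin ℓ → Fin m) (i : Fin d) :
    (φ (C.f t)).basisCoeff (.ofEquivFun (C.τ t).symm) (.ofEquivFun (C.ρ t).symm) idx jdx i =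
      t ^ (C.b i + C.a * (Finset.univ.filter (jdx · = ⟨0, hm⟩)).card
          - C.a * (Finset.univ.filter (idx · = ⟨0, hm⟩)).card) *
        (φ (C.g t⁻¹)).basisCoeff (.ofEquivFun (C.τ' t⁻¹).symm) (.ofEquivFun (C.ρ' t⁻¹).symm)
          idx jdx i := by
  have hprod : ∀ {n : ℕ} (f : Fin n → Fin m),
      ∏ j, (if (f j : ℕ) = 0 then t ^ (-(C.a : ℤ)) else 1) =
        t ^ (-(C.a : ℤ) * (Finset.univ.filter (f · = ⟨0, hm⟩)).card) := by
    intro n f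
    rw [Finset.prod_ite, Finset.prod_const, Finset.prod_const_one, mul_one, zpow_mul,
      zpow_natCast]
    simp [Fin.ext_iff]
  rw [basisCoeff_ofEquivFun_of_eq (C.compat t ht) (fun p => by split_ifs <;> simp [ht])
    (fun i => zpow_ne_zero _ ht) (C.trans t ht) (C.transV t ht), hprod, hprod,
    ← zpow_neg, ← zpow_neg, ← zpow_add₀ ht, ← zpow_add₀ ht]
  congr 2
  ring

theorem apply_ofEquivFun_eq_zero (hH : HolAlong hm φ C) (idx : Fin k → Fin m)
    (jdx : Fin ℓ → Fin m)
    (hlt : (Finset.univ.filter (jdx · = ⟨0, hm⟩)).card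
      < (Finset.univ.filter (idx · = ⟨0, hm⟩)).card) :
    φ (C.f 0) (fun j => Basis.ofEquivFun (C.τ 0).symm (idx j))
      (fun r => (Basis.ofEquivFun (C.τ 0).symm).coord (jdx r)) = 0 := by
  refine (Basis.ofEquivFun (C.ρ 0).symm).ext_elem_iff.mpr fun i => ?_
  rw [map_zero, Finsupp.zero_apply]
  have hexp : C.b i + C.a * (Finset.univ.filter (jdx · = ⟨0, hm⟩)).card
      - C.a * (Finset.univ.filter (idx · = ⟨0, hm⟩)).card < 0 := by
    have := C.nonpos i
    have := C.ample
    nlinarith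
  refine Differentiable.apply_eq_zero_of_eq_zpow_mul_comp_inv
    (F := fun t => (φ (C.f t)).basisCoeff (.ofEquivFun (C.τ t).symm) (.ofEquivFun (C.ρ t).symm)
      idx jdx i)
    (G := fun s => (φ (C.g s)).basisCoeff (.ofEquivFun (C.τ' s).symm) (.ofEquivFun (C.ρ' s).symm)
      idx jdx i)
    ?_ ?_ hexp (fun t ht => C.basisCoeff_eq_zpow_mul ht idx jdx i) 0
  · simpa only [MultilinearMap.basisCoeff_ofEquivFun] using hH.1 idx jdx i
  · simpa only [MultilinearMap.basisCoeff_ofEquivFun] using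
      (hH.2 idx jdx i).continuous.continuousAt

theorem killsPositiveWeight (hH : HolAlong hm φ C) : (φ x).KillsPositiveWeight u := by
  obtain ⟨c, hc, hfib⟩ := C.fiber
  have h0 := ((φ (C.f 0)).killsPositiveWeight_basis_iff (.ofEquivFun (C.τ 0).symm) ⟨0, hm⟩).mpr
    (C.apply_ofEquivFun_eq_zero hH)
  simp only [Basis.coe_ofEquivFun, LinearEquiv.symm_symm, hfib] at h0
  exact (killsPositiveWeight_cast C.basept).mp (h0.of_smul hc)

end SAFCurve

end Bundle

theorem hom_to_nonpositive_tensor_sym_vanishes_general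
    [∀ x, FiniteDimensional ℂ (𝒰 x)]
    (hm : 0 < m) (hℓk : ℓ < k)
    (M' : Set M)
    (Uo : ∀ x : M, Set (𝒰 x))
    (hUo : ∀ x ∈ M', (Uo x).Nonempty ∧ (0 : 𝒰 x) ∉ Uo x)
    (hUoOpen : ∀ x ∈ M', ∀ u ∈ Uo x, ∀ w : 𝒰 x,
      ∀ᶠ c : ℂ in nhds 0, u + c • w ∈ Uo x)
    (φ : ∀ y : M, MultilinearMap ℂ (fun _ : Fin k => 𝒰 y)
      (MultilinearMap ℂ (fun _ : Fin ℓ => Module.Dual ℂ (𝒰 y)) (𝒱 y)))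
    -- SAF-condition for (M, 𝒰), nonpositivity of 𝒱, and holomorphy of φ
    -- along the SAF curves :
    (hSAF : ∀ x ∈ M', ∀ u ∈ Uo x,
      ∃ C : SAFCurve M 𝒰 𝒱 m d hm x u, HolAlong hm φ C) :
    ∀ x ∈ M', φ x = 0 := by
  intro x hx
  obtain ⟨u₀, hu₀⟩ := (hUo x hx).1
  have hkills : ∀ u ∈ Uo x, (φ x).KillsPositiveWeight u := fun u hu =>
    let ⟨C, hC⟩ := hSAF x hx u hu
    C.killsPositiveWeight hC
  let b := Module.finBasis ℂ (𝒰 x)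
  refine (φ x).eq_zero_of_killsPositiveWeight_basis (by simpa using hℓk) b fun p =>
    MultilinearMap.killsPositiveWeight_of_eventually (u₀ := u₀) (fun w => ?_) (b.ne_zero p)
  filter_upwards [hUoOpen x hx u₀ hu₀ w] with c hc using hkills _ hc

theorem hom_to_nonpositive_tensor_sym_vanishes
    [∀ x, FiniteDimensional ℂ (𝒰 x)] [∀ x, FiniteDimensional ℂ (𝒱 x)]
    (hm : 0 < m) (hm2 : 2 ≤ m) (hℓk : ℓ < k)
    (hrkU : ∀ x, finrank ℂ (𝒰 x) = m) (hrkV : ∀ x, finrank ℂ (𝒱 x) = d)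
    (M' : Set M) (hM' : M'.Nonempty)
    (Uo : ∀ x : M, Set (𝒰 x))
    (hUo : ∀ x ∈ M', (Uo x).Nonempty ∧ (0 : 𝒰 x) ∉ Uo x)
    (hUoOpen : ∀ x ∈ M', ∀ u ∈ Uo x, ∀ w : 𝒰 x,
      ∀ᶠ c : ℂ in nhds 0, u + c • w ∈ Uo x)
    (φ : ∀ y : M, MultilinearMap ℂ (fun _ : Fin k => 𝒰 y)
      (MultilinearMap ℂ (fun _ : Fin ℓ => Module.Dual ℂ (𝒰 y)) (𝒱 y)))
    -- φ takes values in 𝒱 ⊗ Sym^ℓ 𝒰 (symmetric multilinear maps on 𝒰*) :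
    (hsym : ∀ (y : M) (v : Fin k → 𝒰 y) (σp : Equiv.Perm (Fin ℓ))
      (fs : Fin ℓ → Module.Dual ℂ (𝒰 y)), φ y v fs = φ y v (fs ∘ σp))
    -- SAF-condition for (M, 𝒰), nonpositivity of 𝒱, and holomorphy of φ
    -- along the SAF curves :
    (hSAF : ∀ x ∈ M', ∀ u ∈ Uo x,
      ∃ C : SAFCurve M 𝒰 𝒱 m d hm x u, HolAlong hm φ C) :
    ∀ x ∈ M', φ x = 0 :=
  hom_to_nonpositive_tensor_sym_vanishes_general hm hℓk M' Uo hUo hUoOpen φ hSAF
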